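/- For n ≥ 2 and any odd k with 1 ≤ k < n, the map φ on vertices of the n-dimensional crossed cube CQ_n defined by negating the k-th bit of each vertex address, φ(u) = f_k(u), is a graph automorphism of CQ_n. -/

import Mathlib

/-- The pair-related relation on 2-bit strings `(x₂, x₁)`. -/
def pairRel (a b : Bool × Bool) : Prop :=
  (a = (false, false) ∧ b = (false, false)) ∨
  (a = (true, false) ∧ b = (true, false)) ∨
  (a = (false, true) ∧ b = (true, true)) ∨
  (a = (true, true) ∧ b = (false, true))

/-- Bit `i` of a length-`n` address (`false` out of range). -/
def bitOf {n : ℕ} (u : Fin n → Bool) (i : ℕ) : Bool :=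
  if h : i < n then u ⟨i, h⟩ else false

/-- `u` and `v` are adjacent along dimension `x` in the crossed cube. -/
def adjAlong (n : ℕ) (u v : Fin n → Bool) (x : ℕ) : Prop :=
  x < n ∧
  bitOf v x = !(bitOf u x) ∧
  (x % 2 = 1 → bitOf v (x - 1) = bitOf u (x - 1)) ∧
  (∀ i, x < i → bitOf u i = bitOf v i) ∧
  (∀ i, 2 * i + 1 < x →
    pairRel (bitOf u (2 * i + 1), bitOf u (2 * i)) (bitOf v (2 * i + 1), bitOf v (2 * i)))

/-- The `n`-dimensional crossed cube. -/
def CQ (n : ℕ) : SimpleGraph (Fin n → Bool) where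
  Adj u v := ∃ x, adjAlong n u v x ∨ adjAlong n v u x
  symm := by refine ⟨?_⟩; rintro u v ⟨x, h | h⟩; exacts [⟨x, Or.inr h⟩, ⟨x, Or.inl h⟩]
  loopless := by
    refine ⟨?_⟩
    rintro u ⟨x, h | h⟩ <;>
    · obtain ⟨-, h2, -⟩ := h
      simp at h2

/-- `fneg n i u` negates bit `i` of `u`. -/
def fneg (n i : ℕ) (u : Fin n → Bool) : Fin n → Bool :=
  fun j => if (j : ℕ) = i then !(u j) else u j

/-- `φ` is an automorphism of `CQ n`. -/
def IsAut (n : ℕ) (φ : (Fin n → Bool) → (Fin n → Bool)) : Prop :=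
  Function.Bijective φ ∧ ∀ u v, (CQ n).Adj u v ↔ (CQ n).Adj (φ u) (φ v)

/-- Vertices in the same orbit of the automorphism group. -/
def orbitSetoid (n : ℕ) : Setoid (Fin n → Bool) where
  r u v := ∃ φ : CQ n ≃g CQ n, φ u = v
  iseqv := by
    refine ⟨fun u => ⟨RelIso.refl (CQ n).Adj, rfl⟩, ?_, ?_⟩
    · rintro u v ⟨φ, h⟩
      exact ⟨φ.symm, by rw [← h]; exact φ.symm_apply_apply u⟩
    · rintro u v w ⟨φ, h⟩ ⟨ψ, h'⟩
      exact ⟨RelIso.trans φ ψ, by simp [RelIso.trans_apply, h, h']⟩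

/-- The orbit number of `CQ n`. -/
noncomputable def Orb (n : ℕ) : ℕ := Nat.card (Quotient (orbitSetoid n))

/-- There is a path on exactly 4 vertices from `x` to `y` in `CQ n`. -/
def hasP4 (n : ℕ) (x y : Fin n → Bool) : Prop :=
  ∃ a b, (CQ n).Adj x a ∧ (CQ n).Adj a b ∧ (CQ n).Adj b y ∧
    x ≠ a ∧ x ≠ b ∧ x ≠ y ∧ a ≠ b ∧ a ≠ y ∧ b ≠ y

/-- The automorphism in Lemma 4 (odd `n ≥ 3`). -/
def phiOdd (n : ℕ) (u : Fin n → Bool) : Fin n → Bool :=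
  if bitOf u (n - 1) = false then fneg n (n - 3) u
  else fneg n (n - 3) (fneg n (n - 2) u)

/-- The automorphism in Lemma 5 (even `n ≥ 4`). -/
def phiEven (n : ℕ) (u : Fin n → Bool) : Fin n → Bool :=
  if (bitOf u (n-1) = false ∧ bitOf u (n-2) = true  ∧ bitOf u (n-3) = false ∧ bitOf u (n-4) = false) ∨
     (bitOf u (n-1) = true  ∧ bitOf u (n-2) = false ∧ bitOf u (n-3) = false ∧ bitOf u (n-4) = false) ∨
     (bitOf u (n-1) = false ∧ bitOf u (n-2) = true  ∧ bitOf u (n-3) = true  ∧ bitOf u (n-4) = true) ∨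
     (bitOf u (n-1) = true  ∧ bitOf u (n-2) = false ∧ bitOf u (n-3) = true  ∧ bitOf u (n-4) = true)
  then fneg n (n-4) (fneg n (n-3) u) else fneg n (n-4) u

/-- Append two zero bits at the low end. -/
def ext2 {n : ℕ} (v : Fin n → Bool) : Fin (n + 2) → Bool :=
  fun j => if h : 2 ≤ (j : ℕ) then v ⟨(j : ℕ) - 2, by have := j.isLt; omega⟩ else false

/-- Delete the two least significant bits. -/
def drop2 {n : ℕ} (w : Fin (n + 2) → Bool) : Fin n → Bool :=
  fun j => w ⟨(j : ℕ) + 2, by have := j.isLt; omega⟩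

lemma fneg_invol (n i : ℕ) (u : Fin n → Bool) : fneg n i (fneg n i u) = u := by
  funext j; simp [fneg]; split <;> simp

lemma bitOf_fneg {n k : ℕ} (hk : k < n) (u : Fin n → Bool) (i : ℕ) :
    bitOf (fneg n k u) i = if i = k then !(bitOf u i) else bitOf u i := by
  unfold bitOf fneg
  by_cases h : i < n
  · simp [h]
  · simp [h]; intro hik; omega

lemma pairRel_negHi {a b : Bool × Bool} (h : pairRel a b) :
    pairRel (!a.1, a.2) (!b.1, b.2) := by
  rcases h with ⟨h1, h2⟩ | ⟨h1, h2⟩ | ⟨h1, h2⟩ | ⟨h1, h2⟩ <;> subst h1 <;> subst h2 <;>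
    simp [pairRel]

lemma adjAlong_fneg {n k : ℕ} (hodd : k % 2 = 1) (hkn : k < n)
    {u v : Fin n → Bool} {x : ℕ} (h : adjAlong n u v x) :
    adjAlong n (fneg n k u) (fneg n k v) x := by
  obtain ⟨hx, h1, h2, h3, h4⟩ := h
  refine ⟨hx, ?_, ?_, ?_, ?_⟩
  · rw [bitOf_fneg hkn, bitOf_fneg hkn]
    split <;> simp [h1]
  · intro hxo
    have hne : x - 1 ≠ k := by omega
    rw [bitOf_fneg hkn, bitOf_fneg hkn, if_neg hne, if_neg hne]
    exact h2 hxo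
  · intro i hi
    rw [bitOf_fneg hkn, bitOf_fneg hkn]
    split <;> simp [h3 i hi]
  · intro i hi
    have he : 2 * i ≠ k := by omega
    rw [bitOf_fneg hkn, bitOf_fneg hkn, bitOf_fneg hkn, bitOf_fneg hkn,
      if_neg he, if_neg he]
    by_cases hh : 2 * i + 1 = k
    · rw [if_pos hh, if_pos hh]
      exact pairRel_negHi (h4 i hi)
    · rw [if_neg hh, if_neg hh]
      exact h4 i hi

lemma adj_fneg {n k : ℕ} (hodd : k % 2 = 1) (hkn : k < n)
    {u v : Fin n → Bool} (h : (CQ n).Adj u v) :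
    (CQ n).Adj (fneg n k u) (fneg n k v) := by
  obtain ⟨x, h | h⟩ := h
  · exact ⟨x, Or.inl (adjAlong_fneg hodd hkn h)⟩
  · exact ⟨x, Or.inr (adjAlong_fneg hodd hkn h)⟩

/-- for `n ≥ 2` and odd `k` with `1 ≤ k < n`, negating bit `k` is an
automorphism of `CQ n`. -/
theorem fneg_odd_isAut (n k : ℕ) (hn : 2 ≤ n) (hodd : k % 2 = 1)
    (hk1 : 1 ≤ k) (hkn : k < n) :
    IsAut n (fneg n k) := by
  refine ⟨Function.Involutive.bijective (fneg_invol n k), fun u v => ⟨adj_fneg hodd hkn, ?_⟩⟩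
  intro h
  have := adj_fneg hodd hkn h
  rwa [fneg_invol, fneg_invol] at this
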